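/- Let f be C¹ on (0,∞) with f > 0, f' > 0 and finite tail F(u) = ∫_u^∞ ds/f(s). Suppose the limits p₀ = lim_{u→0⁺} u·f'(u)/f(u) and q₀ = lim_{u→0⁺} f'(u)·F(u) both exist, are finite, and satisfy p₀ > 1, q₀ > 1, f(u) → 0 and F(u) → ∞ as u → 0⁺. Then 1/p₀ + 1/q₀ = 1. -/

import Mathlib

open Set Filter MeasureTheory Topology

/-!
The product `G = f F` satisfies `G' = f' F - 1` and `G(u) / u = (f' F) / (u f' / f)`, which tends
to `q₀ / p₀`. In particular `G → 0`, so L'Hôpital's rule applied to `G(u) / u` gives the limit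
`q₀ - 1` as well.
Hence `q₀ / p₀ = q₀ - 1`, which rearranges to `1 / p₀ + 1 / q₀ = 1`.
-/

theorem hasDerivAt_integral_Ioi {E : Type*} [NormedAddCommGroup E] [NormedSpace ℝ E]
    [CompleteSpace E] {g : ℝ → E} {a x : ℝ} (hg : IntegrableOn g (Ioi a)) (hax : a < x)
    (hgx : ContinuousAt g x) :
    HasDerivAt (fun u => ∫ s in Ioi u, g s) (-g x) x := by
  have htail : ∀ u ∈ Ioi a, ∫ s in Ioi u, g s = (∫ s in Ioi a, g s) - ∫ s in a..u, g s :=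
    fun u hu => by rw [← intervalIntegral.integral_Ioi_sub_Ioi hg (le_of_lt hu), sub_sub_cancel]
  have hint : IntervalIntegrable g volume a x :=
    (intervalIntegrable_iff_integrableOn_Ioc_of_le hax.le).2 (hg.mono_set Ioc_subset_Ioi_self)
  have hmeas : StronglyMeasurableAtFilter g (𝓝 x) :=
    ⟨Ioi a, Ioi_mem_nhds hax, hg.aestronglyMeasurable⟩
  exact ((intervalIntegral.integral_hasDerivAt_right hint hmeas hgx).const_sub _)
    |>.congr_of_eventuallyEq (eventually_of_mem (Ioi_mem_nhds hax) htail)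

theorem tendsto_div_self_nhdsGT_zero_of_hasDerivAt {G G' : ℝ → ℝ} {l : Filter ℝ}
    (hG : ∀ᶠ x in 𝓝[>] 0, HasDerivAt G (G' x) x) (hG0 : Tendsto G (𝓝[>] 0) (𝓝 0))
    (hG' : Tendsto G' (𝓝[>] 0) l) :
    Tendsto (fun x => G x / x) (𝓝[>] 0) l :=
  HasDerivAt.lhopital_zero_nhdsGT hG (Eventually.of_forall hasDerivAt_id')
    (Eventually.of_forall fun _ => one_ne_zero) hG0 (tendsto_id.mono_left nhdsWithin_le_nhds)
    (by simpa only [div_one] using hG')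

theorem one_div_add_one_div_eq_one {p q : ℝ} (hp : p ≠ 0) (h : q / p = q - 1) :
    1 / p + 1 / q = 1 := by
  have hq : q ≠ 0 := by
    rintro rfl
    norm_num at h
  field_simp at h ⊢
  linarith

theorem stmt_18_general (f f' F : ℝ → ℝ) (p₀ q₀ : ℝ)
    (hf' : ∀ u > (0 : ℝ), HasDerivAt f (f' u) u)
    (hfpos : ∀ u > (0 : ℝ), 0 < f u)
    (hFint : ∀ u > (0 : ℝ), MeasureTheory.IntegrableOn (fun s => 1 / f s) (Set.Ioi u))
    (hF : ∀ u > (0 : ℝ), F u = ∫ s in Set.Ioi u, 1 / f s)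
    (hp : 1 < p₀)
    (hp0 : Filter.Tendsto (fun u => u * f' u / f u)
      (nhdsWithin 0 (Set.Ioi 0)) (nhds p₀))
    (hq0 : Filter.Tendsto (fun u => f' u * F u)
      (nhdsWithin 0 (Set.Ioi 0)) (nhds q₀)) :
    1 / p₀ + 1 / q₀ = 1 := by
  have hpos : ∀ᶠ u in 𝓝[>] (0 : ℝ), 0 < u := self_mem_nhdsWithin
  have hp₀ : p₀ ≠ 0 := by positivity
  have hFd : ∀ u > (0 : ℝ), HasDerivAt F (-(1 / f u)) u := fun u hu =>
    (hasDerivAt_integral_Ioi (hFint (u / 2) (half_pos hu)) (half_lt_self hu)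
      (continuousAt_const.div (hf' u hu).continuousAt (hfpos u hu).ne')).congr_of_eventuallyEq
      (eventually_of_mem (Ioi_mem_nhds hu) hF)
  have hGd : ∀ᶠ u in 𝓝[>] (0 : ℝ), HasDerivAt (fun x => f x * F x) (f' u * F u - 1) u := by
    filter_upwards [hpos] with u hu
    exact ((hf' u hu).mul (hFd u hu)).congr_deriv (by field_simp [(hfpos u hu).ne']; ring)
  have hratio : Tendsto (fun u => f u * F u / u) (𝓝[>] 0) (𝓝 (q₀ / p₀)) := by
    refine (hq0.div hp0 hp₀).congr' ?_
    filter_upwards [hpos, hp0.eventually_ne hp₀] with u hu hne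
    have hf'u : f' u ≠ 0 := fun h => hne (by rw [h, mul_zero, zero_div])
    rw [Pi.div_apply]
    field_simp [(hfpos u hu).ne']
  have hG0 : Tendsto (fun u => f u * F u) (𝓝[>] 0) (𝓝 0) := by
    have hid : Tendsto id (𝓝[>] (0 : ℝ)) (𝓝 0) := tendsto_id.mono_left nhdsWithin_le_nhds
    refine (mul_zero (q₀ / p₀) ▸ hratio.mul hid).congr' ?_
    filter_upwards [hpos] with u hu
    exact div_mul_cancel₀ _ hu.ne'
  have hlhopital := tendsto_div_self_nhdsGT_zero_of_hasDerivAt hGd hG0 (hq0.sub_const 1)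
  exact one_div_add_one_div_eq_one hp₀ (tendsto_nhds_unique hratio hlhopital)

theorem stmt_18 (f f' F : ℝ → ℝ) (p₀ q₀ : ℝ)
    (hf' : ∀ u > (0 : ℝ), HasDerivAt f (f' u) u)
    (hf'c : ContinuousOn f' (Set.Ioi 0))
    (hfpos : ∀ u > (0 : ℝ), 0 < f u)
    (hf'pos : ∀ u > (0 : ℝ), 0 < f' u)
    (hf0 : Filter.Tendsto f (nhdsWithin 0 (Set.Ioi 0)) (nhds 0))
    (hFint : ∀ u > (0 : ℝ), MeasureTheory.IntegrableOn (fun s => 1 / f s) (Set.Ioi u))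
    (hF : ∀ u > (0 : ℝ), F u = ∫ s in Set.Ioi u, 1 / f s)
    (hFinf : Filter.Tendsto F (nhdsWithin 0 (Set.Ioi 0)) Filter.atTop)
    (hp : 1 < p₀) (hq : 1 < q₀)
    (hp0 : Filter.Tendsto (fun u => u * f' u / f u)
      (nhdsWithin 0 (Set.Ioi 0)) (nhds p₀))
    (hq0 : Filter.Tendsto (fun u => f' u * F u)
      (nhdsWithin 0 (Set.Ioi 0)) (nhds q₀)) :
    1 / p₀ + 1 / q₀ = 1 :=
  stmt_18_general f f' F p₀ q₀ hf' hfpos hFint hF hp hp0 hq0
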